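/- arXiv:2304.00077 — 9 statements merged into one kernel-verified Lean document; each statement's English description precedes it below -/
import Mathlib

section
/- For every natural number n and real numbers x, y with x ≠ 0, the sum over k from 0 to n of C(n,k) * x^k * y^(n-k) / ((k+1)*(k+2)) equals ((x+y)^(n+2) - ((n+2)*x + y) * y^(n+1)) / ((n+1)*(n+2)*x^2). -/
theorem stmt_1 (n : ℕ) (x y : ℝ) (hx : x ≠ 0) :
    ∑ k ∈ Finset.range (n + 1),
        (n.choose k : ℝ) * x ^ k * y ^ (n - k) / ((k + 1) * (k + 2))
      = ((x + y) ^ (n + 2) - ((n + 2) * x + y) * y ^ (n + 1))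
          / ((n + 1) * (n + 2) * x ^ 2) := by
  have hnat : ∀ k : ℕ, (n+1)*(n+2)*(n.choose k) = (k+1)*(k+2)*((n+2).choose (k+2)) := by
    intro k
    have h1 := Nat.add_one_mul_choose_eq n k
    have h2 := Nat.add_one_mul_choose_eq (n+1) (k+1)
    change (n+2) * (n+1).choose (k+1) = (n+2).choose (k+2) * (k+2) at h2
    calc (n+1)*(n+2)*(n.choose k) = (n+2)*((n+1)*n.choose k) := by ring
      _ = (n+2)*((n+1).choose (k+1) * (k+1)) := by rw [h1]
      _ = (k+1)*((n+2)*(n+1).choose (k+1)) := by ring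
      _ = (k+1)*((n+2).choose (k+2) * (k+2)) := by rw [h2]
      _ = (k+1)*(k+2)*((n+2).choose (k+2)) := by ring
  have expand : (x+y)^(n+2)
      = (∑ k ∈ Finset.range (n+1), ((n+2).choose (k+2) : ℝ) * x^(k+2) * y^(n-k))
        + (n+2)*x*y^(n+1) + y^(n+2) := by
    rw [add_pow, Finset.sum_range_succ', Finset.sum_range_succ']
    congr 1
    congr 1
    · apply Finset.sum_congr rfl
      intro k hk
      have h : n + 2 - (k + 2) = n - k := by omega
      rw [h]; ring
    · have h : n + 2 - 1 = n + 1 := by omega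
      rw [h]; simp [Nat.choose_one_right]; ring
    · simp
  have hstep : ∀ k ∈ Finset.range (n+1),
      (n.choose k : ℝ) * x ^ k * y ^ (n - k) / ((k + 1) * (k + 2))
        = ((n+2).choose (k+2) : ℝ) * x^(k+2) * y^(n-k) / ((n+1)*(n+2)*x^2) := by
    intro k hk
    have hq : ((n:ℝ)+1)*((n:ℝ)+2)*(n.choose k) = ((k:ℝ)+1)*((k:ℝ)+2)*((n+2).choose (k+2)) := by
      exact_mod_cast hnat k
    rw [div_eq_div_iff (by positivity) (by positivity)]
    linear_combination (x^k * x^2 * y^(n-k)) * hq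
  rw [Finset.sum_congr rfl hstep, ← Finset.sum_div]
  have hs : ∑ k ∈ Finset.range (n+1), ((n+2).choose (k+2) : ℝ) * x^(k+2) * y^(n-k)
      = (x+y)^(n+2) - (n+2)*x*y^(n+1) - y^(n+2) := by linarith [expand]
  rw [hs]

  ring
end

section
/- For every natural number n and real numbers x, y with x ≠ 0, the sum over k from 0 to n of C(n,k) * x^k * y^(n-k) / (k+2) equals (((n+1)*x - y) * (x+y)^(n+1) + y^(n+2)) / ((n+1)*(n+2)*x^2). -/
lemma aux1 (m : ℕ) (x y : ℝ) :
    ∑ k ∈ Finset.range (m + 2), (k : ℝ) * (m + 1).choose k * x ^ k * y ^ (m + 1 - k)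
      = (m + 1) * x * (x + y) ^ m := by
  rw [Finset.sum_range_succ']
  simp only [Nat.cast_zero, zero_mul, add_zero]
  have h : ∀ i ∈ Finset.range (m + 1),
      ((i + 1 : ℕ) : ℝ) * (m + 1).choose (i + 1) * x ^ (i + 1) * y ^ (m + 1 - (i + 1))
        = (m + 1) * x * ((x ^ i * y ^ (m - i)) * (m.choose i : ℝ)) := by
    intro i _
    have hc : ((m + 1 : ℕ) * m.choose i : ℝ) = (((m + 1).choose (i + 1) * (i + 1) : ℕ) : ℝ) := by
      exact_mod_cast congrArg (Nat.cast (R := ℝ)) (Nat.add_one_mul_choose_eq m i)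
    push_cast at hc
    have he : m + 1 - (i + 1) = m - i := by omega
    rw [he]
    push_cast
    linear_combination -x ^ (i + 1) * y ^ (m - i) * hc
  rw [Finset.sum_congr rfl h, ← Finset.mul_sum, ← add_pow]
lemma aux2 (n : ℕ) (x y : ℝ) :
    x ^ 2 * ∑ k ∈ Finset.range (n + 1),
        ((k : ℝ) + 1) * (n + 2).choose (k + 2) * x ^ k * y ^ (n - k)
      = ((n + 1) * x - y) * (x + y) ^ (n + 1) + y ^ (n + 2) := by
  set f : ℕ → ℝ := fun j => ((j : ℝ) - 1) * (n + 2).choose j * x ^ j * y ^ (n + 2 - j) with hf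
  have hF : ∑ j ∈ Finset.range (n + 3), f j
      = (n + 2) * x * (x + y) ^ (n + 1) - (x + y) ^ (n + 2) := by
    have hb : ((x + y) ^ (n + 2) : ℝ)
        = ∑ j ∈ Finset.range (n + 3), ((n + 2).choose j : ℝ) * x ^ j * y ^ (n + 2 - j) := by
      rw [add_pow]
      exact Finset.sum_congr rfl fun j _ => by ring
    have ha := aux1 (n + 1) x y
    have hsplit : ∑ j ∈ Finset.range (n + 3), f j
        = (∑ j ∈ Finset.range (n + 3), (j : ℝ) * (n + 2).choose j * x ^ j * y ^ (n + 2 - j))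
          - ∑ j ∈ Finset.range (n + 3), ((n + 2).choose j : ℝ) * x ^ j * y ^ (n + 2 - j) := by
      rw [← Finset.sum_sub_distrib]
      exact Finset.sum_congr rfl fun j _ => by simp [hf]; ring
    rw [hsplit, ← hb]
    norm_num at ha ⊢
    rw [ha]
    ring
  have hshift : ∑ j ∈ Finset.range (n + 3), f j
      = (∑ k ∈ Finset.range (n + 1), f (k + 2)) + f 1 + f 0 := by
    rw [Finset.sum_range_succ' f (n + 2), Finset.sum_range_succ' _ (n + 1)]
  have hf1 : f 1 = 0 := by simp [hf]
  have hf0 : f 0 = -y ^ (n + 2) := by simp [hf]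
  rw [hshift, hf1, hf0] at hF
  have he : ∀ k ∈ Finset.range (n + 1),
      f (k + 2) = x ^ 2 * (((k : ℝ) + 1) * (n + 2).choose (k + 2) * x ^ k * y ^ (n - k)) := by
    intro k _
    have h : n + 2 - (k + 2) = n - k := by omega
    simp only [hf, h]
    push_cast
    ring
  rw [Finset.sum_congr rfl he, ← Finset.mul_sum] at hF
  linear_combination hF

theorem stmt_2 (n : ℕ) (x y : ℝ) (hx : x ≠ 0) :
    ∑ k ∈ Finset.range (n + 1), (n.choose k : ℝ) * x ^ k * y ^ (n - k) / (k + 2)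
      = (((n + 1) * x - y) * (x + y) ^ (n + 1) + y ^ (n + 2))
          / ((n + 1) * (n + 2) * x ^ 2) := by
  have hterm : ∀ k ∈ Finset.range (n + 1),
      (n.choose k : ℝ) * x ^ k * y ^ (n - k) / (k + 2)
        = (((k : ℝ) + 1) * (n + 2).choose (k + 2) * x ^ k * y ^ (n - k))
            / ((n + 1) * (n + 2)) := by
    intro k _
    have h1 : ((n + 1 : ℕ) * n.choose k : ℝ) = (((n + 1).choose (k + 1) * (k + 1) : ℕ) : ℝ) := by
      exact_mod_cast congrArg (Nat.cast (R := ℝ)) (Nat.add_one_mul_choose_eq n k)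
    have h2 : ((n + 2 : ℕ) * (n + 1).choose (k + 1) : ℝ)
        = (((n + 2).choose (k + 2) * (k + 2) : ℕ) : ℝ) := by
      exact_mod_cast congrArg (Nat.cast (R := ℝ)) (Nat.add_one_mul_choose_eq (n + 1) (k + 1))
    push_cast at h1 h2
    have h3 : ((n : ℝ) + 1) * ((n : ℝ) + 2) * (n.choose k : ℝ)
        = ((k : ℝ) + 1) * ((k : ℝ) + 2) * ((n + 2).choose (k + 2) : ℝ) := by
      linear_combination ((n : ℝ) + 2) * h1 + ((k : ℝ) + 1) * h2
    have hk2 : ((k : ℝ) + 2) ≠ 0 := by positivity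
    have hn1 : ((n : ℝ) + 1) ≠ 0 := by positivity
    have hn2 : ((n : ℝ) + 2) ≠ 0 := by positivity
    rw [div_eq_div_iff hk2 (by positivity)]
    linear_combination x ^ k * y ^ (n - k) * h3
  rw [Finset.sum_congr rfl hterm, ← Finset.sum_div]
  rw [← aux2 n x y]
  have hn1 : ((n : ℝ) + 1) ≠ 0 := by positivity
  have hn2 : ((n : ℝ) + 2) ≠ 0 := by positivity
  field_simp
end

section
/- For every natural number n ≥ 1 and real numbers q ∈ (0,1] and F ∈ (0,1], it holds that (1 - (1 - q*F)^n)/(n*F) > (1 - (1 - q*F)^(n+1))/((n+1)*F), i.e., the function Φ(F,q,n) = (1 - (1-qF)^n)/(nF) is strictly decreasing in n. -/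
/-! With `x = 1 - q * F ∈ [0, 1)`, the identity `1 - x ^ n = (1 - x) (1 + x + ⋯ + x ^ (n - 1))`
and `1 - x = q * F` turn `Φ(F, q, n)` into `q` times the mean of `1, x, …, x ^ (n - 1)`.
Appending the term `x ^ n`, which is smaller than the first one and no larger than any of them,
strictly lowers that mean. -/

open Finset

theorem Antitone.sum_range_succ_div_lt {K : Type*} [Field K] [LinearOrder K] [IsStrictOrderedRing K]
    {f : ℕ → K} (hf : Antitone f) {n : ℕ} (hfn : f n < f 0) :
    (∑ k ∈ range (n + 1), f k) / (n + 1) < (∑ k ∈ range n, f k) / n := by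
  have hn : 0 < n := Nat.pos_of_ne_zero (by rintro rfl; exact lt_irrefl _ hfn)
  have hlast : n * f n < ∑ k ∈ range n, f k :=
    calc n * f n = ∑ _k ∈ range n, f n := by simp
      _ < ∑ k ∈ range n, f k :=
        sum_lt_sum (fun k hk => hf (mem_range.1 hk).le) ⟨0, mem_range.2 hn, hfn⟩
  rw [div_lt_div_iff₀ (by positivity) (by positivity), sum_range_succ]
  linear_combination hlast

theorem one_sub_pow_div_eq_mul_geom_mean {K : Type*} [Field K] {q F : K} (hF : F ≠ 0) (n : ℕ) :
    (1 - (1 - q * F) ^ n) / (n * F) = q * ((∑ k ∈ range n, (1 - q * F) ^ k) / n) := by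
  rw [← mul_neg_geom_sum, sub_sub_cancel, mul_right_comm, mul_div_mul_right _ _ hF, mul_div_assoc]

theorem stmt_4 (n : ℕ) (hn : 1 ≤ n) (q F : ℝ) (hq0 : 0 < q) (hq1 : q ≤ 1)
    (hF0 : 0 < F) (hF1 : F ≤ 1) :
    (1 - (1 - q * F) ^ (n + 1)) / ((n + 1) * F) < (1 - (1 - q * F) ^ n) / (n * F) := by
  set x := 1 - q * F
  have hx0 : 0 ≤ x := sub_nonneg.2 (mul_le_one₀ hq1 hF0.le hF1)
  have hx1 : x < 1 := sub_lt_self 1 (mul_pos hq0 hF0)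
  have hpow : Antitone (x ^ ·) := fun _ _ hkl => pow_le_pow_of_le_one hx0 hx1.le hkl
  have hmean : (∑ k ∈ range (n + 1), x ^ k) / (n + 1) < (∑ k ∈ range n, x ^ k) / n :=
    hpow.sum_range_succ_div_lt ((pow_lt_one₀ hx0 hx1 (by omega)).trans_eq (pow_zero x).symm)
  have hΦ := one_sub_pow_div_eq_mul_geom_mean (q := q) hF0.ne'
  rw [hΦ n, ← Nat.cast_succ, hΦ (n + 1), Nat.cast_succ]
  exact mul_lt_mul_of_pos_left hmean hq0
end

section
/- For every natural number k ≥ 0 and real q ∈ (0,1], the sum over t from 0 to k of C(k,t) * q^t * (1-q)^(k-t) / (t+2) equals ((k+2)*q - 1 + (1-q)^(k+2)) / ((k+1)*(k+2)*q^2). -/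
/-!
Since `C(k, t) / (t + 2) = (t + 1) C(k + 2, t + 2) / ((k + 1)(k + 2))`, multiplying the sum by
`(k + 1)(k + 2) q²` turns it into `∑_{s ≥ 2} (s - 1) b_{k+2,s}(q)` over the Bernstein basis
`b_{n,s}(q) = C(n, s) q^s (1 - q)^(n - s)`. Over all `s` this is `E[S] - 1 = (k + 2) q - 1` for
`S ~ Bin(k + 2, q)`; the term `s = 1` vanishes and the term `s = 0` is `-(1 - q)^(k + 2)`.
-/

open Finset Polynomial

theorem Nat.add_one_mul_add_two_mul_choose_add_two (k t : ℕ) :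
    (t + 1) * (t + 2) * (k + 2).choose (t + 2) = (k + 1) * (k + 2) * k.choose t := by
  calc (t + 1) * (t + 2) * (k + 2).choose (t + 2)
      = (t + 1) * ((k + 2) * (k + 1).choose (t + 1)) := by
        rw [Nat.add_one_mul_choose_eq (k + 1) (t + 1)]; ring
    _ = (k + 2) * ((k + 1) * k.choose t) := by rw [Nat.add_one_mul_choose_eq k t]; ring
    _ = (k + 1) * (k + 2) * k.choose t := by ring

theorem bernsteinPolynomial.sum_sub_one_mul (R : Type*) [CommRing R] (n : ℕ) :
    ∑ ν ∈ range (n + 1), ((ν : R[X]) - 1) * bernsteinPolynomial R n ν = (n : R[X]) * X - 1 := by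
  simp only [sub_mul, one_mul, sum_sub_distrib, ← nsmul_eq_mul, sum_smul, sum]

theorem mul_sum_choose_mul_pow_div_add_two {K : Type*} [Field K] [CharZero K] (k : ℕ) (q : K) :
    (k + 1) * (k + 2) * q ^ 2 *
        ∑ t ∈ range (k + 1), (k.choose t : K) * q ^ t * (1 - q) ^ (k - t) / (t + 2)
      = (k + 2) * q - 1 + (1 - q) ^ (k + 2) := by
  have hterm (t : ℕ) :
      (k + 1) * (k + 2) * q ^ 2 * ((k.choose t : K) * q ^ t * (1 - q) ^ (k - t) / (t + 2))
        = ((t : K) + 2 - 1) * (bernsteinPolynomial K (k + 2) (t + 2)).eval q := by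
    have hc : ((t : K) + 1) * (t + 2) * ((k + 2).choose (t + 2) : K)
        = (k + 1) * (k + 2) * k.choose t := by
      exact_mod_cast Nat.add_one_mul_add_two_mul_choose_add_two k t
    have ht : (t : K) + 2 ≠ 0 := by norm_cast
    rw [bernsteinPolynomial, Nat.add_sub_add_right]
    simp only [eval_mul, eval_pow, eval_natCast, eval_sub, eval_one, eval_X]
    field_simp
    linear_combination (-q ^ (t + 2) * (1 - q) ^ (k - t)) * hc
  have hzero : (bernsteinPolynomial K (k + 2) 0).eval q = (1 - q) ^ (k + 2) := by
    simp [bernsteinPolynomial]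
  have htotal := congrArg (eval q) (bernsteinPolynomial.sum_sub_one_mul K (k + 2))
  rw [eval_finsetSum, sum_range_succ', sum_range_succ'] at htotal
  simp only [eval_mul, eval_sub, eval_natCast, eval_one, eval_X, hzero] at htotal
  simp only [Nat.add_assoc, Nat.reduceAdd, Nat.cast_add, Nat.cast_ofNat, Nat.cast_one,
    Nat.cast_zero, zero_add, sub_self, zero_mul, add_zero] at htotal
  rw [mul_sum, sum_congr rfl fun t _ => hterm t]
  linear_combination htotal

theorem stmt_8_general (k : ℕ) (q : ℝ) (hq0 : 0 < q) :
    ∑ t ∈ Finset.range (k + 1), (k.choose t : ℝ) * q ^ t * (1 - q) ^ (k - t) / (t + 2)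
      = ((k + 2) * q - 1 + (1 - q) ^ (k + 2)) / ((k + 1) * (k + 2) * q ^ 2) := by
  rw [← mul_sum_choose_mul_pow_div_add_two, mul_div_cancel_left₀]
  positivity

theorem stmt_8 (k : ℕ) (q : ℝ) (hq0 : 0 < q) (hq1 : q ≤ 1) :
    ∑ t ∈ Finset.range (k + 1), (k.choose t : ℝ) * q ^ t * (1 - q) ^ (k - t) / (t + 2)
      = ((k + 2) * q - 1 + (1 - q) ^ (k + 2)) / ((k + 1) * (k + 2) * q ^ 2) :=
  stmt_8_general k q hq0
end

section
/- Let n ≥ 1 be a natural number, q ∈ (0,1], and x ∈ (0,1] with q*x < 1. Then the sum over k from 0 to n-1 of C(n-1,k) * x^k * (1-x)^(n-1-k) * (1 - (1-q)^(k+1))/(k+1) equals (1 - (1 - q*x)^n)/(n*x). -/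
/-!
Since `C(n-1, k) / (k+1) = C(n, k+1) / n`, each summand equals
`C(n, k+1) (x^(k+1) - (x(1-q))^(k+1)) (1-x)^(n-1-k) / (n x)`.
Summing over `k`, the binomial theorem turns the two halves into
`1 - (1-x)^n` and `(1-qx)^n - (1-x)^n`, whose difference is `1 - (1-qx)^n`.
-/

open Finset

theorem sum_range_choose_succ_mul_pow {R : Type*} [CommRing R] (m : ℕ) (a b : R) :
    ∑ k ∈ range (m + 1), ((m + 1).choose (k + 1) : R) * a ^ (k + 1) * b ^ (m - k)
      = (a + b) ^ (m + 1) - b ^ (m + 1) := by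
  rw [eq_sub_iff_add_eq, add_pow, sum_range_succ' _ (m + 1)]
  simp only [pow_zero, Nat.choose_zero_right, Nat.cast_one, one_mul, mul_one, Nat.sub_zero]
  congr 1
  refine sum_congr rfl fun k _ => ?_
  rw [show m + 1 - (k + 1) = m - k by omega]
  ring

theorem choose_mul_pow_mul_one_sub_pow_div_succ {K : Type*} [Field K] [CharZero K] {x : K}
    (hx : x ≠ 0) (q : K) (m k : ℕ) :
    (m.choose k : K) * x ^ k * (1 - x) ^ (m - k) * (1 - (1 - q) ^ (k + 1)) / (k + 1)
      = (((m + 1).choose (k + 1) : K) * x ^ (k + 1) * (1 - x) ^ (m - k)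
          - ((m + 1).choose (k + 1) : K) * (x * (1 - q)) ^ (k + 1) * (1 - x) ^ (m - k))
        / ((m + 1) * x) := by
  have habsorb : ((m + 1).choose (k + 1) : K) * (k + 1) = (m + 1) * m.choose k := by
    exact_mod_cast (Nat.add_one_mul_choose_eq m k).symm
  rw [div_eq_div_iff (Nat.cast_add_one_ne_zero k) (mul_ne_zero (Nat.cast_add_one_ne_zero m) hx),
    mul_pow]
  linear_combination (x ^ (k + 1) * ((1 - q) ^ (k + 1) - 1) * (1 - x) ^ (m - k)) * habsorb

theorem stmt_9_general (n : ℕ) (q x : ℝ) (hx0 : 0 < x) :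
    ∑ k ∈ Finset.range n,
        ((n - 1).choose k : ℝ) * x ^ k * (1 - x) ^ (n - 1 - k)
          * (1 - (1 - q) ^ (k + 1)) / (k + 1)
      = (1 - (1 - q * x) ^ n) / (n * x) := by
  cases n with
  | zero => simp
  | succ m =>
    simp only [Nat.add_sub_cancel,
      choose_mul_pow_mul_one_sub_pow_div_succ hx0.ne', ← sum_div, sum_sub_distrib,
      sum_range_choose_succ_mul_pow]
    push_cast
    congr 1
    ring

theorem stmt_9 (n : ℕ) (hn : 1 ≤ n) (q x : ℝ) (hq0 : 0 < q) (hq1 : q ≤ 1)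
    (hx0 : 0 < x) (hx1 : x ≤ 1) (hqx : q * x < 1) :
    ∑ k ∈ Finset.range n,
        ((n - 1).choose k : ℝ) * x ^ k * (1 - x) ^ (n - 1 - k)
          * (1 - (1 - q) ^ (k + 1)) / (k + 1)
      = (1 - (1 - q * x) ^ n) / (n * x) :=
  stmt_9_general n q x hx0
end

section
/- Let V > 0, q ∈ (0,1], n ≥ 1, and let F : [c_lo, c_hi] → [0,1] be a continuous strictly increasing cdf with F(c_lo) = 0 and F(c_hi) = 1, where 0 ≤ c_lo < c_hi. Define Φ(c) = (1-(1-q*F(c))^n)/(n*F(c)) for c > c_lo and Φ(c_lo) = q. If c_lo < q*V and V*(1-(1-q)^n)/n < c_hi, then there exists a unique c* ∈ (c_lo, c_hi) with c* = V*Φ(c*). -/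
theorem stmt_10 (V q clo chi : ℝ) (n : ℕ) (F : ℝ → ℝ)
    (hV : 0 < V) (hq0 : 0 < q) (hq1 : q ≤ 1) (hn : 1 ≤ n)
    (hclo : 0 ≤ clo) (hlt : clo < chi)
    (hFcont : ContinuousOn F (Set.Icc clo chi))
    (hFmono : StrictMonoOn F (Set.Icc clo chi))
    (hFlo : F clo = 0) (hFhi : F chi = 1)
    (hlow : clo < q * V) (hhigh : V * (1 - (1 - q) ^ n) / n < chi) :
    ∃! c, c ∈ Set.Ioo clo chi ∧
      c = V * ((1 - (1 - q * F c) ^ n) / (n * F c)) := by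
  have hn0 : (0:ℝ) < n := by exact_mod_cast Nat.lt_of_lt_of_le Nat.zero_lt_one hn
  set g : ℝ → ℝ := fun c => V * q / n * (∑ k ∈ Finset.range n, (1 - q * F c) ^ k) - c with hg
  -- F bounds on Icc
  have hF01 : ∀ c ∈ Set.Icc clo chi, 0 ≤ F c ∧ F c ≤ 1 := by
    intro c hc
    constructor
    · rw [← hFlo]
      exact hFmono.monotoneOn (Set.left_mem_Icc.2 hlt.le) hc hc.1
    · rw [← hFhi]
      exact hFmono.monotoneOn hc (Set.right_mem_Icc.2 hlt.le) hc.2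
  -- g strictly antitone on Icc
  have hanti : StrictAntiOn g (Set.Icc clo chi) := by
    intro a ha b hb hab
    have hFa := hF01 a ha
    have hFb := hF01 b hb
    have hFab : F a < F b := hFmono ha hb hab
    have h1 : 0 ≤ 1 - q * F b := by nlinarith [hFb.2]
    have hsum : (∑ k ∈ Finset.range n, (1 - q * F b) ^ k)
        ≤ ∑ k ∈ Finset.range n, (1 - q * F a) ^ k := by
      apply Finset.sum_le_sum
      intro k _
      exact pow_le_pow_left₀ h1 (by nlinarith) k
    have hpos : 0 < V * q / n := by positivity
    have := mul_le_mul_of_nonneg_left hsum hpos.le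
    simp only [hg]
    linarith
  -- continuity of g
  have hgcont : ContinuousOn g (Set.Icc clo chi) := by
    apply ContinuousOn.sub _ continuousOn_id
    apply ContinuousOn.mul continuousOn_const
    apply continuousOn_finset_sum
    intro k _
    exact (continuousOn_const.sub (continuousOn_const.mul hFcont)).pow k
  -- boundary values
  have hglo : 0 < g clo := by
    simp only [hg, hFlo, mul_zero, sub_zero, one_pow, Finset.sum_const,
      Finset.card_range, nsmul_eq_mul, mul_one]
    have : V * q / n * n = V * q := by field_simp
    rw [this]
    linarith [hlow]
  have hsumq : q * (∑ k ∈ Finset.range n, (1 - q) ^ k) = 1 - (1 - q) ^ n := by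
    have := geom_sum_mul (1 - q) n
    nlinarith [this]
  have hghi : g chi < 0 := by
    simp only [hg, hFhi, mul_one]
    have h1 : V * q / n * (∑ k ∈ Finset.range n, (1 - q) ^ k)
        = V * (1 - (1 - q) ^ n) / n := by
      rw [← hsumq]; ring
    rw [h1]
    linarith
  -- equivalence of fixed point equation with g = 0
  have hequiv : ∀ c ∈ Set.Ioo clo chi,
      (c = V * ((1 - (1 - q * F c) ^ n) / (n * F c)) ↔ g c = 0) := by
    intro c hc
    have hcIcc : c ∈ Set.Icc clo chi := ⟨hc.1.le, hc.2.le⟩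
    have hFc : 0 < F c := by
      rw [← hFlo]
      exact hFmono (Set.left_mem_Icc.2 hlt.le) hcIcc hc.1
    have hgeo : 1 - (1 - q * F c) ^ n
        = q * F c * (∑ k ∈ Finset.range n, (1 - q * F c) ^ k) := by
      have := geom_sum_mul (1 - q * F c) n
      nlinarith [this]
    rw [hgeo]
    have h2 : V * (q * F c * (∑ k ∈ Finset.range n, (1 - q * F c) ^ k) / (n * F c))
        = V * q / n * (∑ k ∈ Finset.range n, (1 - q * F c) ^ k) := by
      field_simp
    rw [h2]
    simp only [hg]
    constructor
    · intro h; linarith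
    · intro h; linarith
  -- existence via IVT
  have hmem : (0:ℝ) ∈ Set.Icc (g chi) (g clo) := ⟨hghi.le, hglo.le⟩
  obtain ⟨c, hcIcc, hgc⟩ := intermediate_value_Icc' hlt.le hgcont hmem
  have hcne1 : c ≠ clo := by rintro rfl; linarith
  have hcne2 : c ≠ chi := by rintro rfl; linarith
  have hcIoo : c ∈ Set.Ioo clo chi :=
    ⟨lt_of_le_of_ne hcIcc.1 (Ne.symm hcne1), lt_of_le_of_ne hcIcc.2 hcne2⟩
  refine ⟨c, ⟨hcIoo, (hequiv c hcIoo).2 hgc⟩, ?_⟩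
  rintro y ⟨hyIoo, hy⟩
  have hgy : g y = 0 := (hequiv y hyIoo).1 hy
  exact hanti.injOn ⟨hyIoo.1.le, hyIoo.2.le⟩ hcIcc (by rw [hgy, hgc])
end

section
/- Let (c_n) be a decreasing sequence in [c_lo, c_hi] satisfying c_n * n * F(c_n) = V * (1 - (1 - q*F(c_n))^n) for all n, where F is a continuous strictly increasing cdf on [c_lo, c_hi] with F(c_lo) = 0, V > 0, q ∈ (0,1], and c_lo ≥ 0. Then c_n → c_lo as n → ∞. -/
open Filter Set

lemma mul_one_sub_pow_le_of_even {V : ℝ} (x : ℝ) {n : ℕ} (hV : 0 ≤ V) (hn : Even n) :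
    V * (1 - x ^ n) ≤ V := by
  nlinarith [mul_nonneg hV (hn.pow_nonneg x)]

/-- If `c` stayed above some `b > clo`, then `c n * n * F (c n) ≥ b * F b * n` with `b * F b > 0`,
which is unbounded. -/
theorem Antitone.tendsto_of_frequently_mul_nat_mul_le {V clo chi : ℝ} {F : ℝ → ℝ} {c : ℕ → ℝ}
    (hclo : 0 ≤ clo) (hF : StrictMonoOn F (Icc clo chi)) (hFlo : F clo = 0)
    (hmem : ∀ n, c n ∈ Icc clo chi) (hc : Antitone c)
    (hbdd : ∃ᶠ n in atTop, c n * n * F (c n) ≤ V) :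
    Tendsto c atTop (nhds clo) := by
  refine tendsto_atTop_isGLB hc ⟨?_, fun b hb => ?_⟩
  · rintro _ ⟨n, rfl⟩
    exact (hmem n).1
  by_contra! hclob
  have hb_mem : b ∈ Icc clo chi := ⟨hclob.le, (hb (mem_range_self 0)).trans (hmem 0).2⟩
  have hFb : 0 < F b := hFlo ▸ hF ⟨le_rfl, hb_mem.1.trans hb_mem.2⟩ hb_mem hclob
  have hbFb : 0 < b * F b := mul_pos (hclo.trans_lt hclob) hFb
  have hlower : ∀ n : ℕ, b * F b * n ≤ c n * n * F (c n) := fun n => by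
    have hbc : b ≤ c n := hb (mem_range_self n)
    have hFbc : F b ≤ F (c n) := hF.monotoneOn hb_mem (hmem n) hbc
    have : b * F b ≤ c n * F (c n) := mul_le_mul hbc hFbc hFb.le (hclo.trans (hb_mem.1.trans hbc))
    nlinarith [(n.cast_nonneg : (0 : ℝ) ≤ n)]
  have hgrow : ∀ᶠ n : ℕ in atTop, V < b * F b * n :=
    (tendsto_natCast_atTop_atTop.const_mul_atTop hbFb).eventually_gt_atTop V
  obtain ⟨n, hn_le, hn_gt⟩ := (hbdd.and_eventually hgrow).exists
  linarith [hlower n]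

theorem stmt_12_general (V q clo chi : ℝ) (F : ℝ → ℝ) (c : ℕ → ℝ)
    (hV : 0 < V) (hclo : 0 ≤ clo)
    (hFmono : StrictMonoOn F (Set.Icc clo chi))
    (hFlo : F clo = 0)
    (hmem : ∀ n, c n ∈ Set.Icc clo chi)
    (hdec : Antitone c)
    (heq : ∀ n : ℕ, 1 ≤ n → c n * n * F (c n) = V * (1 - (1 - q * F (c n)) ^ n)) :
    Filter.Tendsto c Filter.atTop (nhds clo) := by
  refine hdec.tendsto_of_frequently_mul_nat_mul_le hclo hFmono hFlo hmem (V := V) ?_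
  -- For even `n` the power is nonnegative, so the right-hand side is at most `V` whatever `F` is.
  refine (Nat.frequently_even.and_eventually (eventually_ge_atTop 1)).mono fun n ⟨heven, hn⟩ => ?_
  rw [heq n hn]
  exact mul_one_sub_pow_le_of_even _ hV.le heven

theorem stmt_12 (V q clo chi : ℝ) (F : ℝ → ℝ) (c : ℕ → ℝ)
    (hV : 0 < V) (hq0 : 0 < q) (hq1 : q ≤ 1) (hclo : 0 ≤ clo) (hlt : clo < chi)
    (hFcont : ContinuousOn F (Set.Icc clo chi))
    (hFmono : StrictMonoOn F (Set.Icc clo chi))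
    (hFlo : F clo = 0)
    (hmem : ∀ n, c n ∈ Set.Icc clo chi)
    (hdec : Antitone c)
    (heq : ∀ n : ℕ, 1 ≤ n → c n * n * F (c n) = V * (1 - (1 - q * F (c n)) ^ n)) :
    Filter.Tendsto c Filter.atTop (nhds clo) :=
  stmt_12_general V q clo chi F c hV hclo hFmono hFlo hmem hdec heq
end

section
/- Let q ∈ (0,1], c_lo > 0, V > 0 with c_lo < q*V, let F be a continuous strictly increasing cdf on [c_lo, c_hi] with F(c_lo)=0, and let (c_n) satisfy the equilibrium condition c_n = V*(1-(1-q*F(c_n))^n)/(n*F(c_n)) with c_n → c_lo. Then n*F(c_n) → κ, where κ is the unique positive solution of c_lo = V*(1-exp(-q*κ))/κ, and consequently 1-(1-q*F(c_n))^n → 1 - exp(-q*κ). -/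
open Filter Real Set

lemma aux_pow_sub_pow_le (a b : ℝ) (hb : 0 ≤ b) (hba : b ≤ a) (ha : a ≤ 1) :
    ∀ n : ℕ, a ^ n - b ^ n ≤ n * (a - b) := by
  intro n
  induction n with
  | zero => simp
  | succ k ih =>
    have h1 : b ^ k ≤ a ^ k := pow_le_pow_left₀ hb hba k
    have h2 : b ^ k ≤ 1 := pow_le_one₀ hb (hba.trans ha)
    have h3 : a ^ k ≤ 1 := pow_le_one₀ (hb.trans hba) ha
    have key : a ^ (k+1) - b ^ (k+1) = a * (a ^ k - b ^ k) + (a - b) * b ^ k := by ring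
    push_cast
    nlinarith [pow_nonneg hb k, sub_nonneg.mpr h1, sub_nonneg.mpr hba, sub_nonneg.mpr ha,
      sub_nonneg.mpr h2]

lemma aux_strictAnti (V q : ℝ) (hV : 0 < V) (hq : 0 < q) :
    StrictAntiOn (fun t : ℝ => V * (1 - Real.exp (-(q * t))) / t) (Set.Ioi 0) := by
  apply strictAntiOn_of_deriv_neg (convex_Ioi 0)
  · apply ContinuousOn.div
    · fun_prop
    · fun_prop
    · intro t ht; exact ne_of_gt ht
  · intro t ht
    rw [interior_Ioi] at ht
    have ht0 : (0:ℝ) < t := ht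
    have hd : HasDerivAt (fun t : ℝ => V * (1 - Real.exp (-(q * t))) / t)
        ((V * (Real.exp (-(q * t)) * q) * t - V * (1 - Real.exp (-(q * t))) * 1) / t ^ 2) t := by
      have h1 : HasDerivAt (fun t : ℝ => -(q * t)) (-q) t := by
        have := ((hasDerivAt_id t).const_mul q).neg; rw [mul_one] at this; exact this
      have h2 : HasDerivAt (fun t : ℝ => Real.exp (-(q * t))) (Real.exp (-(q * t)) * (-q)) t :=
        h1.exp
      have h3 : HasDerivAt (fun t : ℝ => V * (1 - Real.exp (-(q * t))))
          (V * (Real.exp (-(q * t)) * q)) t := by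
        simpa [mul_comm, mul_assoc, mul_neg] using ((hasDerivAt_const t (1:ℝ)).sub h2).const_mul V
      exact h3.div (hasDerivAt_id t) (ne_of_gt ht0)
    rw [hd.deriv]
    apply div_neg_of_neg_of_pos
    · have hlt : q * t + 1 < Real.exp (q * t) :=
        Real.add_one_lt_exp (by positivity)
      have he : Real.exp (-(q * t)) = (Real.exp (q * t))⁻¹ := by
        rw [Real.exp_neg]
      have hp : 0 < Real.exp (q * t) := Real.exp_pos _
      rw [he]
      have h4 : (Real.exp (q*t))⁻¹ * Real.exp (q*t) = 1 := inv_mul_cancel₀ (ne_of_gt hp)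
      nlinarith [mul_pos (mul_pos hV hq) ht0, inv_pos.mpr hp,
        mul_lt_mul_of_pos_left hlt (mul_pos hV (inv_pos.mpr hp))]
    · positivity

theorem stmt_15 (V q clo chi κ : ℝ) (F : ℝ → ℝ) (c : ℕ → ℝ)
    (hV : 0 < V) (hq0 : 0 < q) (hq1 : q ≤ 1) (hclo : 0 < clo) (hlt : clo < chi)
    (hlow : clo < q * V)
    (hFcont : ContinuousOn F (Set.Icc clo chi))
    (hFmono : StrictMonoOn F (Set.Icc clo chi))
    (hFlo : F clo = 0)
    (hmem : ∀ n, c n ∈ Set.Icc clo chi)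
    (heq : ∀ n : ℕ, 1 ≤ n →
      c n = V * ((1 - (1 - q * F (c n)) ^ n) / (n * F (c n))))
    (hconv : Filter.Tendsto c Filter.atTop (nhds clo))
    (hκ : 0 < κ) (hκeq : clo = V * (1 - Real.exp (-q * κ)) / κ) :
    Filter.Tendsto (fun n : ℕ => (n : ℝ) * F (c n)) Filter.atTop (nhds κ) ∧
      Filter.Tendsto (fun n : ℕ => 1 - (1 - q * F (c n)) ^ n) Filter.atTop
        (nhds (1 - Real.exp (-q * κ))) := by
  have hcloIcc : clo ∈ Set.Icc clo chi := ⟨le_refl _, hlt.le⟩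
  -- positivity of F (c n)
  have hxpos : ∀ n : ℕ, 1 ≤ n → 0 < F (c n) := by
    intro n hn
    rcases lt_or_eq_of_le (hmem n).1 with h | h
    · have := hFmono hcloIcc (hmem n) h
      rwa [hFlo] at this
    · exfalso
      have h2 := heq n hn
      rw [← h, hFlo] at h2
      simp at h2
      linarith [(hmem n).1, h2]
  have hy_pos : ∀ n : ℕ, 1 ≤ n → 0 < (n:ℝ) * F (c n) := fun n hn =>
    mul_pos (by exact_mod_cast Nat.lt_of_lt_of_le Nat.zero_lt_one hn) (hxpos n hn)
  -- F (c n) → 0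
  have hx0 : Tendsto (fun n => F (c n)) atTop (nhds 0) := by
    have h1 : Tendsto c atTop (nhdsWithin clo (Set.Icc clo chi)) :=
      tendsto_nhdsWithin_of_tendsto_nhds_of_eventually_within c hconv
        (Filter.Eventually.of_forall hmem)
    have h2 := (hFcont clo hcloIcc).tendsto.comp h1
    rwa [hFlo] at h2
  -- the identity
  have hid : ∀ n : ℕ, 1 ≤ n →
      c n * ((n:ℝ) * F (c n)) = V * (1 - (1 - q * F (c n)) ^ n) := by
    intro n hn
    set X := F (c n) with hX
    have hy := hy_pos n hn
    rw [heq n hn, mul_assoc, div_mul_cancel₀ _ (ne_of_gt hy)]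
  set g : ℝ → ℝ := fun t => V * (1 - Real.exp (-(q * t))) / t with hg
  -- key bound
  have hkey : ∀ n : ℕ, 1 ≤ n → q * F (c n) ≤ 1 →
      0 ≤ c n - g ((n:ℝ) * F (c n)) ∧
        c n - g ((n:ℝ) * F (c n)) ≤ V * q^2 * F (c n) := by
    intro n hn hqx
    set X := F (c n) with hX
    set Y := (n:ℝ) * X with hY
    have hXpos : 0 < X := hxpos n hn
    have hYpos : 0 < Y := hy_pos n hn
    have ht0 : 0 ≤ q * X := by positivity
    have hb0 : (0:ℝ) ≤ 1 - q * X := by linarith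
    have hba : 1 - q * X ≤ Real.exp (-(q * X)) := by
      have := Real.add_one_le_exp (-(q * X)); linarith
    have ha1 : Real.exp (-(q * X)) ≤ 1 := by
      rw [← Real.exp_zero]
      exact Real.exp_le_exp.mpr (by linarith)
    have habs : Real.exp (-(q * X)) - (1 - q * X) ≤ (q * X)^2 := by
      have hx1 : |(-(q * X))| ≤ 1 := by rw [abs_neg, abs_of_nonneg ht0]; exact hqx
      have h := (abs_le.mp (Real.abs_exp_sub_one_sub_id_le hx1)).2
      rw [neg_sq] at h; linarith
    have hpow : Real.exp (-(q * X))^n - (1 - q * X)^n ≤ (n:ℝ) * (q * X)^2 :=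
      (aux_pow_sub_pow_le _ _ hb0 hba ha1 n).trans
        (mul_le_mul_of_nonneg_left habs (Nat.cast_nonneg n))
    have hpow0 : (1 - q * X)^n ≤ Real.exp (-(q * X))^n := pow_le_pow_left₀ hb0 hba n
    have hexp : Real.exp (-(q * X))^n = Real.exp (-(q * Y)) := by
      rw [← Real.exp_nat_mul]; congr 1; rw [hY]; ring
    have hidn := hid n hn
    have hc : c n = V * (1 - (1 - q * X)^n) / Y := by
      rw [eq_div_iff (ne_of_gt hYpos)]; exact hidn
    have hgY : g Y = V * (1 - Real.exp (-(q * Y))) / Y := rfl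
    have hdiff : c n - g Y = V * (Real.exp (-(q * Y)) - (1 - q * X)^n) / Y := by
      rw [hc, hgY]; field_simp; ring
    rw [hexp] at hpow0 hpow
    constructor
    · rw [hdiff]
      have : 0 ≤ Real.exp (-(q * Y)) - (1 - q * X)^n := by linarith
      positivity
    · rw [hdiff, div_le_iff₀ hYpos]
      have hbound : Real.exp (-(q * Y)) - (1 - q * X)^n ≤ q^2 * X * Y := by
        have : (n:ℝ) * (q * X)^2 = q^2 * X * Y := by rw [hY]; ring
        linarith
      nlinarith [hV.le, hXpos.le, hYpos.le]
  -- squeeze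
  have hev1 : ∀ᶠ n : ℕ in atTop, q * F (c n) ≤ 1 := by
    have h := (hx0.const_mul q)
    rw [mul_zero] at h
    exact (h.eventually_lt_const one_pos).mono fun n hn => le_of_lt hn
  have hd0 : Tendsto (fun n : ℕ => c n - g ((n:ℝ) * F (c n))) atTop (nhds 0) := by
    apply squeeze_zero'
    · filter_upwards [eventually_ge_atTop 1, hev1] with n hn hq1'
      exact (hkey n hn hq1').1
    · filter_upwards [eventually_ge_atTop 1, hev1] with n hn hq1'
      exact (hkey n hn hq1').2
    · have h := hx0.const_mul (V * q^2)
      rw [mul_zero] at h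
      exact h.congr fun n => by ring
  have hgy : Tendsto (fun n : ℕ => g ((n:ℝ) * F (c n))) atTop (nhds clo) := by
    have h := hconv.sub hd0
    rw [sub_zero] at h
    exact h.congr fun n => by ring
  have hanti : StrictAntiOn g (Set.Ioi 0) := aux_strictAnti V q hV hq0
  have hκmem : κ ∈ Set.Ioi (0:ℝ) := hκ
  have hgκ : g κ = clo := by
    have : clo = V * (1 - Real.exp (-(q * κ))) / κ := by rw [← neg_mul]; exact hκeq
    rw [this]
  have hevy : ∀ᶠ n : ℕ in atTop, 0 < (n:ℝ) * F (c n) :=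
    (eventually_ge_atTop 1).mono fun n hn => hy_pos n hn
  have hyk : Tendsto (fun n : ℕ => (n:ℝ) * F (c n)) atTop (nhds κ) := by
    rw [tendsto_order]
    constructor
    · intro a ha
      rcases le_or_gt a 0 with h0 | h0
      · exact hevy.mono fun n hn => lt_of_le_of_lt h0 hn
      · have hga : clo < g a := by
          rw [← hgκ]; exact hanti (Set.mem_Ioi.mpr h0) hκmem ha
        filter_upwards [hgy.eventually_lt_const hga, hevy] with n h1 h2
        by_contra hcon
        push_neg at hcon
        have := hanti.antitoneOn (Set.mem_Ioi.mpr h2) (Set.mem_Ioi.mpr h0) hcon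
        linarith
    · intro b hb
      have hb0 : (0:ℝ) < b := hκ.trans hb
      have hgb : g b < clo := by
        rw [← hgκ]; exact hanti hκmem (Set.mem_Ioi.mpr hb0) hb
      filter_upwards [hgy.eventually_const_lt hgb, hevy] with n h1 h2
      by_contra hcon
      push_neg at hcon
      have := hanti.antitoneOn (Set.mem_Ioi.mpr hb0) (Set.mem_Ioi.mpr h2) hcon
      linarith
  refine ⟨hyk, ?_⟩
  have h2 : ∀ᶠ n : ℕ in atTop,
      c n * ((n:ℝ) * F (c n)) / V = 1 - (1 - q * F (c n))^n := by
    filter_upwards [eventually_ge_atTop 1] with n hn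
    rw [hid n hn, mul_div_cancel_left₀ _ (ne_of_gt hV)]
  have h3 : Tendsto (fun n : ℕ => c n * ((n:ℝ) * F (c n)) / V) atTop
      (nhds (clo * κ / V)) := (hconv.mul hyk).div_const V
  have h4 : clo * κ / V = 1 - Real.exp (-q * κ) := by
    rw [hκeq]
    field_simp
  rw [h4] at h3
  exact h3.congr' h2
end

section
/- For all natural numbers m ≥ 1 and S ≥ m-1 and real q ∈ (0,1], the difference p^m(S) - p^{m+1}(S) equals q * C(S, m-1) * q^(m-1) * (1-q)^(S-(m-1)) / m, where p^m(S) = q * Σ_{t=m-1}^{S} C(S,t) q^t (1-q)^{S-t} / (t+1); in particular p^m(S) ≥ p^{m+1}(S). -/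
/-! The sums defining `p m S` and `p (m + 1) S` run over `Icc (m - 1) S` and `Icc m S`, so their
difference is the single term `t = m - 1`, which is nonnegative since `0 < q ≤ 1`. -/

open Finset

theorem Finset.sum_Icc_sub_sum_Icc_add_one {α M : Type*} [LinearOrder α] [One α] [Add α]
    [LocallyFiniteOrder α] [SuccAddOrder α] [NoMaxOrder α] [AddCommGroup M] (f : α → M)
    {a b : α} (h : a ≤ b) :
    ∑ t ∈ Icc a b, f t - ∑ t ∈ Icc (a + 1) b, f t = f a := by
  have ha : a ∉ Icc (a + 1) b := by simp [not_le_of_gt (Order.lt_add_one_iff.mpr le_rfl)]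
  rw [← insert_Icc_add_one_left_eq_Icc h, sum_insert ha, add_sub_cancel_right]

theorem stmt_18 (m S : ℕ) (hm : 1 ≤ m) (hS : m - 1 ≤ S) (q : ℝ)
    (hq0 : 0 < q) (hq1 : q ≤ 1)
    (p : ℕ → ℕ → ℝ)
    (hp : ∀ m' S', p m' S' =
      q * ∑ t ∈ Finset.Icc (m' - 1) S',
        (S'.choose t : ℝ) * q ^ t * (1 - q) ^ (S' - t) / (t + 1)) :
    p m S - p (m + 1) S
      = q * (S.choose (m - 1) : ℝ) * q ^ (m - 1) * (1 - q) ^ (S - (m - 1)) / m ∧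
    p (m + 1) S ≤ p m S := by
  obtain ⟨k, rfl⟩ : ∃ k, m = k + 1 := Nat.exists_eq_add_of_le' hm
  simp only [Nat.add_sub_cancel] at hS ⊢
  have hdiff : p (k + 1) S - p (k + 1 + 1) S
      = q * (S.choose k : ℝ) * q ^ k * (1 - q) ^ (S - k) / (k + 1 : ℕ) := by
    rw [hp, hp, Nat.add_sub_cancel, Nat.add_sub_cancel, ← mul_sub,
      sum_Icc_sub_sum_Icc_add_one _ hS]
    push_cast
    ring
  have hq1' : 0 ≤ 1 - q := sub_nonneg.mpr hq1
  refine ⟨hdiff, sub_nonneg.mp ?_⟩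
  rw [hdiff]
  positivity
end
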